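/- arXiv:2311.00892 — 6 statements merged into one kernel-verified Lean document; each statement's English description precedes it below -/
import Mathlib

section
/- Let M1 be an m1×k real matrix, M2 an m2×k real matrix, a ∈ ℝ^{m1}, b ∈ ℝ^{m2}. Suppose u1, u2, w1, w2 ∈ ℝ^k satisfy: M1·u1 = a, M1·u2 = a, M2·w1 = b, M2·w2 = b, u1 and u2 each lie in the row space of M2 (i.e., are linear combinations of the rows of M2), and w1 and w2 each lie in the row space of M1. Then ⟨u1, w1⟩ = ⟨u2, w2⟩. -/
open Matrix

/-- If `M1 u = a`, `M2 w = b`, `u` lies in the row space of `M2` and `w` in the row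
space of `M1` (for both pairs), then the inner product `⟨u, w⟩` is uniquely determined. -/
theorem stmt_0 {m1 m2 k : ℕ} (M1 : Matrix (Fin m1) (Fin k) ℝ) (M2 : Matrix (Fin m2) (Fin k) ℝ)
    (a : Fin m1 → ℝ) (b : Fin m2 → ℝ) (u1 u2 w1 w2 : Fin k → ℝ)
    (hu1 : M1.mulVec u1 = a) (hu2 : M1.mulVec u2 = a)
    (hw1 : M2.mulVec w1 = b) (hw2 : M2.mulVec w2 = b)
    (hu1' : ∃ x : Fin m2 → ℝ, M2.transpose.mulVec x = u1)
    (hu2' : ∃ x : Fin m2 → ℝ, M2.transpose.mulVec x = u2)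
    (hw1' : ∃ y : Fin m1 → ℝ, M1.transpose.mulVec y = w1)
    (hw2' : ∃ y : Fin m1 → ℝ, M1.transpose.mulVec y = w2) :
    u1 ⬝ᵥ w1 = u2 ⬝ᵥ w2 := by
  obtain ⟨x2, hx2⟩ := hu2'
  obtain ⟨y1, hy1⟩ := hw1'
  have h1 : u1 ⬝ᵥ w1 = u2 ⬝ᵥ w1 := by
    rw [← hy1, dotProduct_mulVec, dotProduct_mulVec, vecMul_transpose, vecMul_transpose,
      hu1, hu2]
  have h2 : u2 ⬝ᵥ w1 = u2 ⬝ᵥ w2 := by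
    rw [← hx2, dotProduct_comm, dotProduct_comm (M2ᵀ *ᵥ x2) w2, dotProduct_mulVec,
      dotProduct_mulVec, vecMul_transpose, vecMul_transpose, hw1, hw2]
  rw [h1, h2]
end

section
/- Supersaturated Kővári–Sós–Turán: For every ε > 0 and k ∈ ℕ there exist constants c' > 0 and N ∈ ℕ (depending only on ε and k) such that every bipartite graph with parts of sizes n₁ ≥ n₂ ≥ N and at least ε·n₁·n₂ edges contains at least c'·n₁^{k+1}·n₂^{k+1} copies of the complete bipartite graph K_{k+1,k+1}. -/
set_option maxRecDepth 4000
set_option maxHeartbeats 1000000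
open Finset

lemma ksst_pow_le_fact_mul_choose (k m : ℕ) :
    (max ((m : ℝ) - k) 0) ^ (k + 1) ≤ ((Nat.factorial (k+1)) : ℝ) * (m.choose (k + 1)) := by
  have h0 : (0:ℝ) ≤ max ((m : ℝ) - k) 0 := le_max_right _ _
  have h1 : max ((m : ℝ) - k) 0 ≤ ((m - k : ℕ) : ℝ) := by
    refine max_le ?_ (Nat.cast_nonneg _)
    rcases le_total m k with h | h
    · have : (m:ℝ) ≤ k := by exact_mod_cast h
      have : (m:ℝ) - k ≤ 0 := by linarith
      exact this.trans (Nat.cast_nonneg _)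
    · rw [Nat.cast_sub h]
  have h2 : (m - k) ^ (k+1) ≤ m.descFactorial (k+1) := by
    have := Nat.pow_sub_le_descFactorial m (k+1)
    simpa [Nat.succ_sub_succ] using this
  have h3 : m.descFactorial (k+1) = Nat.factorial (k+1) * m.choose (k+1) :=
    Nat.descFactorial_eq_factorial_mul_choose _ _
  calc (max ((m : ℝ) - k) 0) ^ (k + 1) ≤ ((m - k : ℕ) : ℝ)^(k+1) := pow_le_pow_left₀ h0 h1 _
    _ = (((m-k)^(k+1) : ℕ) : ℝ) := by push_cast; ring
    _ ≤ ((Nat.factorial (k+1) * m.choose (k+1) : ℕ) : ℝ) := by exact_mod_cast h2.trans_eq h3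
    _ = ((Nat.factorial (k+1)) : ℝ) * (m.choose (k + 1)) := by push_cast; ring


open scoped Classical in
lemma ksst_deg_sum {n₁ n₂ : ℕ} (G : Finset (Fin n₁ × Fin n₂)) :
    ∑ x : Fin n₁, (univ.filter fun t => (x, t) ∈ G).card = G.card := by
  calc ∑ x : Fin n₁, (univ.filter fun t => (x, t) ∈ G).card
      = ∑ x : Fin n₁, ∑ t : Fin n₂, if (x, t) ∈ G then 1 else 0 :=
        Finset.sum_congr rfl fun x _ => Finset.card_filter _ _
    _ = ∑ p : Fin n₁ × Fin n₂, if p ∈ G then 1 else 0 := by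
        rw [Fintype.sum_prod_type]
    _ = G.card := by
        rw [← Finset.card_filter]
        simp

open scoped Classical in
lemma ksst_double_count {n₁ n₂ k : ℕ} (G : Finset (Fin n₁ × Fin n₂)) :
    ∑ T ∈ (univ : Finset (Fin n₂)).powersetCard (k+1),
        (univ.filter fun x => ∀ t ∈ T, (x, t) ∈ G).card
      = ∑ x : Fin n₁, ((univ.filter fun t => (x, t) ∈ G).card).choose (k+1) := by
  calc ∑ T ∈ (univ : Finset (Fin n₂)).powersetCard (k+1),
        (univ.filter fun x => ∀ t ∈ T, (x, t) ∈ G).card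
      = ∑ T ∈ (univ : Finset (Fin n₂)).powersetCard (k+1),
          ∑ x : Fin n₁, if ∀ t ∈ T, (x, t) ∈ G then 1 else 0 :=
        Finset.sum_congr rfl fun T _ => Finset.card_filter _ _
    _ = ∑ x : Fin n₁, ∑ T ∈ (univ : Finset (Fin n₂)).powersetCard (k+1),
          if ∀ t ∈ T, (x, t) ∈ G then 1 else 0 := Finset.sum_comm
    _ = ∑ x : Fin n₁, ((univ.filter fun t => (x, t) ∈ G).powersetCard (k+1)).card := by
        refine Finset.sum_congr rfl fun x _ => ?_
        rw [← Finset.card_filter]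
        congr 1
        ext T
        simp only [Finset.mem_filter, Finset.mem_powersetCard, Finset.subset_iff,
          Finset.mem_univ, Finset.mem_filter, true_and, and_true]
        tauto
    _ = _ := by
        refine Finset.sum_congr rfl fun x _ => ?_
        rw [Finset.card_powersetCard]

open scoped Classical in
lemma ksst_copies {n₁ n₂ k : ℕ} (G : Finset (Fin n₁ × Fin n₂)) :
    ∑ T ∈ (univ : Finset (Fin n₂)).powersetCard (k+1),
        ((univ.filter fun x => ∀ t ∈ T, (x, t) ∈ G).card).choose (k+1)
      ≤ (Finset.univ.filter
            (fun p : Finset (Fin n₁) × Finset (Fin n₂) =>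
              p.1.card = k + 1 ∧ p.2.card = k + 1 ∧
              ∀ s ∈ p.1, ∀ t ∈ p.2, (s, t) ∈ G)).card := by
  rw [Finset.card_filter, Fintype.sum_prod_type, Finset.sum_comm]
  have key : ∀ T ∈ (univ : Finset (Fin n₂)).powersetCard (k+1),
      ((univ.filter fun x => ∀ t ∈ T, (x, t) ∈ G).card).choose (k+1)
        = ∑ S : Finset (Fin n₁), if S.card = k + 1 ∧ T.card = k + 1 ∧
              ∀ s ∈ S, ∀ t ∈ T, (s, t) ∈ G then 1 else 0 := by
    intro T hT
    have hTcard : T.card = k + 1 := (Finset.mem_powersetCard.mp hT).2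
    rw [← Finset.card_filter, ← Finset.card_powersetCard]
    congr 1
    ext S
    simp only [Finset.mem_filter, Finset.mem_powersetCard, Finset.subset_iff,
      Finset.mem_univ, true_and, hTcard]
    tauto
  calc ∑ T ∈ (univ : Finset (Fin n₂)).powersetCard (k+1),
        ((univ.filter fun x => ∀ t ∈ T, (x, t) ∈ G).card).choose (k+1)
      = ∑ T ∈ (univ : Finset (Fin n₂)).powersetCard (k+1),
          ∑ S : Finset (Fin n₁), if S.card = k + 1 ∧ T.card = k + 1 ∧
              ∀ s ∈ S, ∀ t ∈ T, (s, t) ∈ G then 1 else 0 := Finset.sum_congr rfl key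
    _ ≤ ∑ T : Finset (Fin n₂), ∑ S : Finset (Fin n₁), if S.card = k + 1 ∧ T.card = k + 1 ∧
              ∀ s ∈ S, ∀ t ∈ T, (s, t) ∈ G then 1 else 0 :=
        Finset.sum_le_sum_of_subset_of_nonneg (Finset.subset_univ _)
          (fun _ _ _ => by positivity)

open scoped Classical in
theorem stmt_6 (ε : ℝ) (hε : 0 < ε) (k : ℕ) :
    ∃ (c' : ℝ) (N : ℕ), 0 < c' ∧
      ∀ (n₁ n₂ : ℕ) (G : Finset (Fin n₁ × Fin n₂)),
        n₂ ≤ n₁ → N ≤ n₂ → ε * n₁ * n₂ ≤ G.card →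
        c' * (n₁ : ℝ) ^ (k + 1) * (n₂ : ℝ) ^ (k + 1) ≤
          ((Finset.univ.filter
            (fun p : Finset (Fin n₁) × Finset (Fin n₂) =>
              p.1.card = k + 1 ∧ p.2.card = k + 1 ∧
              ∀ s ∈ p.1, ∀ t ∈ p.2, (s, t) ∈ G)).card : ℝ) := by
  classical
  set A : ℝ := ((Nat.factorial (k+1)) : ℝ) with hA_def
  have hA : 0 < A := by
    rw [hA_def]
    exact_mod_cast Nat.factorial_pos (k+1)
  set c₁ : ℝ := (ε/2)^(k+1) / A with hc₁_def
  have hc₁ : 0 < c₁ := by positivity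
  refine ⟨(c₁/2)^(k+1) / A, (k+1) + ⌈2*(k:ℝ)/ε⌉₊ + ⌈2*(k:ℝ)/c₁⌉₊ + 1, by positivity, ?_⟩
  intro n₁ n₂ G h12 hN hE
  have hn₂pos : 0 < n₂ := by omega
  have hn₁pos : 0 < n₁ := by omega
  have hn₁R : (0:ℝ) < n₁ := by exact_mod_cast hn₁pos
  have hn₂R : (0:ℝ) < n₂ := by exact_mod_cast hn₂pos
  -- k ≤ (ε/2) n₂
  have hkε : (k:ℝ) ≤ ε/2 * n₂ := by
    have h1 : ⌈2*(k:ℝ)/ε⌉₊ ≤ n₂ := by omega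
    have h2 : 2*(k:ℝ)/ε ≤ n₂ := Nat.ceil_le.mp h1
    rw [div_le_iff₀ hε] at h2
    nlinarith
  -- k ≤ (c₁/2) n₁
  have hkc : (k:ℝ) ≤ c₁/2 * n₁ := by
    have h1 : ⌈2*(k:ℝ)/c₁⌉₊ ≤ n₁ := by omega
    have h2 : 2*(k:ℝ)/c₁ ≤ n₁ := Nat.ceil_le.mp h1
    rw [div_le_iff₀ hc₁] at h2
    nlinarith
  -- notation
  set d : Fin n₁ → ℕ := fun x => (univ.filter fun t => (x, t) ∈ G).card with hd_def
  set pcs : Finset (Finset (Fin n₂)) := (univ : Finset (Fin n₂)).powersetCard (k+1) with hpcs_def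
  set m : Finset (Fin n₂) → ℕ := fun T => (univ.filter fun x => ∀ t ∈ T, (x, t) ∈ G).card
    with hm_def
  set W : ℕ := ∑ x : Fin n₁, (d x).choose (k+1) with hW_def
  have hdeg : ∑ x : Fin n₁, d x = G.card := ksst_deg_sum G
  have hdc : ∑ T ∈ pcs, m T = W := ksst_double_count G
  have hcopies : ∑ T ∈ pcs, (m T).choose (k+1) ≤ (Finset.univ.filter
            (fun p : Finset (Fin n₁) × Finset (Fin n₂) =>
              p.1.card = k + 1 ∧ p.2.card = k + 1 ∧
              ∀ s ∈ p.1, ∀ t ∈ p.2, (s, t) ∈ G)).card := ksst_copies G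
  have hpcs_card : (pcs.card : ℝ) ≤ (n₂:ℝ) ^ (k+1) := by
    have h1 : pcs.card = n₂.choose (k+1) := by
      rw [hpcs_def, Finset.card_powersetCard, Finset.card_univ, Fintype.card_fin]
    have h2 : n₂.choose (k+1) ≤ n₂ ^ (k+1) := by
      calc n₂.choose (k+1) ≤ n₂.descFactorial (k+1) := by
            rw [Nat.descFactorial_eq_factorial_mul_choose]
            exact Nat.le_mul_of_pos_left _ (Nat.factorial_pos _)
        _ ≤ n₂ ^ (k+1) := Nat.descFactorial_le_pow _ _
    rw [h1]
    exact_mod_cast h2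
  -- Stage 1: lower bound on W
  have hSD : ε/2 * n₁ * n₂ ≤ ∑ x : Fin n₁, max ((d x:ℝ) - k) 0 := by
    have h1 : ∑ x : Fin n₁, ((d x:ℝ) - k) ≤ ∑ x : Fin n₁, max ((d x:ℝ) - k) 0 :=
      Finset.sum_le_sum fun x _ => le_max_left _ _
    have h2 : ∑ x : Fin n₁, ((d x:ℝ) - k) = (G.card:ℝ) - k * n₁ := by
      rw [Finset.sum_sub_distrib]
      have : ∑ x : Fin n₁, (d x : ℝ) = (G.card : ℝ) := by rw [← hdeg, Nat.cast_sum]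
      rw [this]
      simp [Finset.card_univ, mul_comm]
    nlinarith
  have hJ1 : (∑ x : Fin n₁, max ((d x:ℝ) - k) 0)^(k+1)
      ≤ (∑ x : Fin n₁, (max ((d x:ℝ) - k) 0)^(k+1)) * (n₁:ℝ)^k := by
    have h := pow_sum_div_card_le_sum_pow (s := (univ : Finset (Fin n₁)))
      (f := fun x => max ((d x:ℝ) - k) 0) (fun _ _ => le_max_right _ _) k
    rw [Finset.card_univ, Fintype.card_fin, div_le_iff₀ (by positivity)] at h
    exact h
  have hsum_pow1 : ∑ x : Fin n₁, (max ((d x:ℝ) - k) 0)^(k+1) ≤ A * W := by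
    calc ∑ x : Fin n₁, (max ((d x:ℝ) - k) 0)^(k+1)
        ≤ ∑ x : Fin n₁, ((Nat.factorial (k+1)) : ℝ) * ((d x).choose (k+1)) :=
          Finset.sum_le_sum fun x _ => ksst_pow_le_fact_mul_choose k (d x)
      _ = A * W := by rw [← Finset.mul_sum, hA_def, hW_def]; push_cast; ring
  have hW : c₁ * n₁ * (n₂:ℝ)^(k+1) ≤ (W:ℝ) := by
    have h1 : ((ε/2) * n₁ * n₂)^(k+1) ≤ A * W * (n₁:ℝ)^k := by
      calc ((ε/2) * n₁ * n₂)^(k+1) ≤ (∑ x : Fin n₁, max ((d x:ℝ) - k) 0)^(k+1) :=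
            pow_le_pow_left₀ (by positivity) hSD _
        _ ≤ (∑ x : Fin n₁, (max ((d x:ℝ) - k) 0)^(k+1)) * (n₁:ℝ)^k := hJ1
        _ ≤ A * W * (n₁:ℝ)^k := by
            exact mul_le_mul_of_nonneg_right hsum_pow1 (by positivity)
    have h2 : c₁ * n₁ * (n₂:ℝ)^(k+1) * (A * (n₁:ℝ)^k) = ((ε/2) * n₁ * n₂)^(k+1) := by
      rw [hc₁_def]
      field_simp
      ring
    have h3 : c₁ * n₁ * (n₂:ℝ)^(k+1) * (A * (n₁:ℝ)^k) ≤ (W:ℝ) * (A * (n₁:ℝ)^k) := by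
      rw [h2]; nlinarith
    exact le_of_mul_le_mul_right h3 (by positivity)
  -- Stage 2
  have hSM : c₁/2 * n₁ * (n₂:ℝ)^(k+1) ≤ ∑ T ∈ pcs, max ((m T:ℝ) - k) 0 := by
    have h1 : ∑ T ∈ pcs, ((m T:ℝ) - k) ≤ ∑ T ∈ pcs, max ((m T:ℝ) - k) 0 :=
      Finset.sum_le_sum fun T _ => le_max_left _ _
    have h2 : ∑ T ∈ pcs, ((m T:ℝ) - k) = (W:ℝ) - k * pcs.card := by
      rw [Finset.sum_sub_distrib]
      have : ∑ T ∈ pcs, (m T : ℝ) = (W : ℝ) := by rw [← hdc, Nat.cast_sum]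
      rw [this]
      simp [mul_comm]
    have h4 : (k:ℝ) * pcs.card ≤ c₁/2 * n₁ * (n₂:ℝ)^(k+1) := by
      calc (k:ℝ) * pcs.card ≤ (k:ℝ) * (n₂:ℝ)^(k+1) := by
            exact mul_le_mul_of_nonneg_left hpcs_card (Nat.cast_nonneg _)
        _ ≤ c₁/2 * n₁ * (n₂:ℝ)^(k+1) := by nlinarith [pow_pos hn₂R (k+1)]
    nlinarith
  have hJ2 : (∑ T ∈ pcs, max ((m T:ℝ) - k) 0)^(k+1)
      ≤ (∑ T ∈ pcs, (max ((m T:ℝ) - k) 0)^(k+1)) * ((n₂:ℝ)^(k+1))^k := by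
    have h := pow_sum_div_card_le_sum_pow (s := pcs)
      (f := fun T => max ((m T:ℝ) - k) 0) (fun _ _ => le_max_right _ _) k
    rcases Nat.eq_zero_or_pos pcs.card with h0 | hpos
    · rw [Finset.card_eq_zero.mp h0]
      simp [pow_succ]
    · rw [div_le_iff₀ (by positivity)] at h
      calc (∑ T ∈ pcs, max ((m T:ℝ) - k) 0)^(k+1)
          ≤ (∑ T ∈ pcs, (max ((m T:ℝ) - k) 0)^(k+1)) * (pcs.card:ℝ)^k := h
        _ ≤ (∑ T ∈ pcs, (max ((m T:ℝ) - k) 0)^(k+1)) * ((n₂:ℝ)^(k+1))^k := by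
            refine mul_le_mul_of_nonneg_left (pow_le_pow_left₀ (by positivity) hpcs_card _) ?_
            exact Finset.sum_nonneg fun T _ => by positivity
  set P : ℕ := (Finset.univ.filter
            (fun p : Finset (Fin n₁) × Finset (Fin n₂) =>
              p.1.card = k + 1 ∧ p.2.card = k + 1 ∧
              ∀ s ∈ p.1, ∀ t ∈ p.2, (s, t) ∈ G)).card with hP_def
  have hsum_pow2 : ∑ T ∈ pcs, (max ((m T:ℝ) - k) 0)^(k+1) ≤ A * P := by
    calc ∑ T ∈ pcs, (max ((m T:ℝ) - k) 0)^(k+1)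
        ≤ ∑ T ∈ pcs, ((Nat.factorial (k+1)) : ℝ) * ((m T).choose (k+1)) :=
          Finset.sum_le_sum fun T _ => ksst_pow_le_fact_mul_choose k (m T)
      _ = A * ((∑ T ∈ pcs, (m T).choose (k+1) : ℕ) : ℝ) := by
          rw [← Finset.mul_sum, hA_def]; push_cast; ring
      _ ≤ A * P := by
          refine mul_le_mul_of_nonneg_left ?_ hA.le
          exact_mod_cast hcopies
  -- Final combination
  have h1 : ((c₁/2) * n₁ * (n₂:ℝ)^(k+1))^(k+1) ≤ A * P * ((n₂:ℝ)^(k+1))^k := by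
    calc ((c₁/2) * n₁ * (n₂:ℝ)^(k+1))^(k+1)
        ≤ (∑ T ∈ pcs, max ((m T:ℝ) - k) 0)^(k+1) := pow_le_pow_left₀ (by positivity) hSM _
      _ ≤ (∑ T ∈ pcs, (max ((m T:ℝ) - k) 0)^(k+1)) * ((n₂:ℝ)^(k+1))^k := hJ2
      _ ≤ A * P * ((n₂:ℝ)^(k+1))^k :=
          mul_le_mul_of_nonneg_right hsum_pow2 (by positivity)
  have h2 : (c₁/2)^(k+1) / A * (n₁:ℝ)^(k+1) * (n₂:ℝ)^(k+1) * (A * ((n₂:ℝ)^(k+1))^k)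
      = ((c₁/2) * n₁ * (n₂:ℝ)^(k+1))^(k+1) := by
    field_simp
    ring
  have h3 : (c₁/2)^(k+1) / A * (n₁:ℝ)^(k+1) * (n₂:ℝ)^(k+1) * (A * ((n₂:ℝ)^(k+1))^k)
      ≤ (P:ℝ) * (A * ((n₂:ℝ)^(k+1))^k) := by
    rw [h2]; nlinarith
  exact le_of_mul_le_mul_right h3 (by positivity)
end

section
/- Double counting step in supersaturation: Let G be a bipartite graph with parts of sizes n₁ and n₂ and at least ε·n₁·n₂ edges, and let m ≤ min(n₁,n₂) be a positive integer. Call a pair (M₁, M₂) with M₁ ⊆ X, M₂ ⊆ Y, |M₁| = |M₂| = m 'saturated' if the induced subgraph G[M₁ ∪ M₂] has at least (ε/2)·m² edges. Then the fraction η of saturated pairs among all such pairs satisfies η ≥ ε/(2−ε). -/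
set_option maxHeartbeats 1000000
open Finset


lemma count_contain {n m : ℕ} (hm : 0 < m) (a : Fin n) :
    (Finset.univ.filter (fun t : Finset (Fin n) => t.card = m ∧ a ∈ t)).card
      = (n - 1).choose (m - 1) := by
  have h : (Finset.univ.filter (fun t : Finset (Fin n) => t.card = m ∧ a ∈ t)).card
      = ((Finset.univ.erase a).powersetCard (m-1)).card := by
    apply Finset.card_nbij' (fun t => t.erase a) (fun s => insert a s)
    · intro t ht
      simp only [Finset.mem_coe, mem_filter, mem_univ, true_and] at ht
      simp only [Finset.mem_coe]
      rw [Finset.mem_powersetCard]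
      refine ⟨fun x hx => ?_, by rw [Finset.card_erase_of_mem ht.2, ht.1]⟩
      simp only [Finset.mem_erase] at hx ⊢
      exact ⟨hx.1, mem_univ _⟩
    · intro s hs
      rw [Finset.mem_coe, Finset.mem_powersetCard] at hs
      have ha : a ∉ s := fun h => (Finset.mem_erase.mp (hs.1 h)).1 rfl
      simp only [Finset.mem_coe, mem_filter, mem_univ, true_and]
      refine ⟨?_, Finset.mem_insert_self a s⟩
      rw [Finset.card_insert_of_notMem ha, hs.2]
      omega
    · intro t ht
      simp only [Finset.mem_coe, mem_filter, mem_univ, true_and] at ht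
      exact Finset.insert_erase ht.2
    · intro s hs
      rw [Finset.mem_coe, Finset.mem_powersetCard] at hs
      have ha : a ∉ s := fun h => (Finset.mem_erase.mp (hs.1 h)).1 rfl
      exact Finset.erase_insert ha
  rw [h, Finset.card_powersetCard, Finset.card_erase_of_mem (Finset.mem_univ a),
    Finset.card_univ, Fintype.card_fin]

lemma card_filter_card (n m : ℕ) :
    (Finset.univ.filter (fun t : Finset (Fin n) => t.card = m)).card = n.choose m := by
  rw [← Finset.powerset_univ, ← Finset.powersetCard_eq_filter, Finset.card_powersetCard,
    Finset.card_univ, Fintype.card_fin]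


/- Double counting step in supersaturation: if a bipartite graph with parts of sizes
`n₁, n₂` has at least `ε n₁ n₂` edges, then the number of pairs `(M₁, M₂)` of `m`-subsets
whose induced subgraph has at least `(ε/2) m²` edges is at least an `ε/(2-ε)` fraction
of all `C(n₁,m) C(n₂,m)` such pairs. -/
open scoped Classical in
theorem stmt_7 {n₁ n₂ m : ℕ} (ε : ℝ) (hε : 0 < ε) (hε' : ε ≤ 1)
    (hm : 0 < m) (hm₁ : m ≤ n₁) (hm₂ : m ≤ n₂)
    (G : Finset (Fin n₁ × Fin n₂)) (hG : ε * n₁ * n₂ ≤ G.card) :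
    (ε / (2 - ε)) * ((Nat.choose n₁ m : ℝ) * (Nat.choose n₂ m : ℝ)) ≤
      ((Finset.univ.filter
        (fun p : Finset (Fin n₁) × Finset (Fin n₂) =>
          p.1.card = m ∧ p.2.card = m ∧
          (ε / 2) * (m : ℝ) ^ 2 ≤
            ((G.filter (fun e => e.1 ∈ p.1 ∧ e.2 ∈ p.2)).card : ℝ))).card : ℝ) := by
  set P : Finset (Finset (Fin n₁) × Finset (Fin n₂)) :=
    Finset.univ.filter (fun p => p.1.card = m ∧ p.2.card = m) with hP
  set f : Finset (Fin n₁) × Finset (Fin n₂) → ℕ :=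
    fun p => (G.filter (fun e => e.1 ∈ p.1 ∧ e.2 ∈ p.2)).card with hf
  set Psat : Finset (Finset (Fin n₁) × Finset (Fin n₂)) :=
    P.filter (fun p => (ε / 2) * (m : ℝ) ^ 2 ≤ (f p : ℝ)) with hPsat
  -- the goal set equals Psat
  have hgoal : (Finset.univ.filter
      (fun p : Finset (Fin n₁) × Finset (Fin n₂) =>
        p.1.card = m ∧ p.2.card = m ∧
        (ε / 2) * (m : ℝ) ^ 2 ≤
          ((G.filter (fun e => e.1 ∈ p.1 ∧ e.2 ∈ p.2)).card : ℝ))) = Psat := by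
    rw [hPsat, hP, Finset.filter_filter]
    apply Finset.filter_congr
    intro p _
    tauto
  rw [hgoal]
  -- total count
  have hPcard : P.card = n₁.choose m * n₂.choose m := by
    have hPe : P = (Finset.univ.filter fun t : Finset (Fin n₁) => t.card = m) ×ˢ
        (Finset.univ.filter fun t : Finset (Fin n₂) => t.card = m) := by
      ext p
      simp [hP, Finset.mem_product]
    rw [hPe, Finset.card_product, card_filter_card, card_filter_card]
  -- double counting
  have hsum : ∑ p ∈ P, f p
      = G.card * ((n₁ - 1).choose (m - 1) * (n₂ - 1).choose (m - 1)) := by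
    calc ∑ p ∈ P, f p
        = ∑ p ∈ P, ∑ e ∈ G, if e.1 ∈ p.1 ∧ e.2 ∈ p.2 then 1 else 0 := by
          refine Finset.sum_congr rfl fun p _ => ?_
          simp only [hf]
          rw [Finset.card_filter]
      _ = ∑ e ∈ G, ∑ p ∈ P, if e.1 ∈ p.1 ∧ e.2 ∈ p.2 then 1 else 0 := Finset.sum_comm
      _ = ∑ e ∈ G, (P.filter (fun p => e.1 ∈ p.1 ∧ e.2 ∈ p.2)).card := by
          refine Finset.sum_congr rfl fun e _ => ?_
          rw [Finset.card_filter]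
      _ = ∑ e ∈ G, ((n₁ - 1).choose (m - 1) * (n₂ - 1).choose (m - 1)) := by
          refine Finset.sum_congr rfl fun e _ => ?_
          have hprod : P.filter (fun p => e.1 ∈ p.1 ∧ e.2 ∈ p.2)
              = (Finset.univ.filter fun t : Finset (Fin n₁) => t.card = m ∧ e.1 ∈ t) ×ˢ
                (Finset.univ.filter fun t : Finset (Fin n₂) => t.card = m ∧ e.2 ∈ t) := by
            ext p
            simp only [hP, Finset.mem_filter, Finset.mem_univ, true_and, Finset.mem_product]
            tauto
          rw [hprod, Finset.card_product, count_contain hm, count_contain hm]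
      _ = G.card * ((n₁ - 1).choose (m - 1) * (n₂ - 1).choose (m - 1)) := by
          rw [Finset.sum_const, smul_eq_mul]
  -- choose identities
  have hc₁ : (n₁ : ℕ) * (n₁ - 1).choose (m - 1) = n₁.choose m * m := by
    obtain ⟨a, rfl⟩ : ∃ a, n₁ = a + 1 := ⟨n₁ - 1, by omega⟩
    obtain ⟨b, rfl⟩ : ∃ b, m = b + 1 := ⟨m - 1, by omega⟩
    simpa using Nat.add_one_mul_choose_eq a b
  have hc₂ : (n₂ : ℕ) * (n₂ - 1).choose (m - 1) = n₂.choose m * m := by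
    obtain ⟨a, rfl⟩ : ∃ a, n₂ = a + 1 := ⟨n₂ - 1, by omega⟩
    obtain ⟨b, rfl⟩ : ∃ b, m = b + 1 := ⟨m - 1, by omega⟩
    simpa using Nat.add_one_mul_choose_eq a b
  set T : ℝ := (n₁.choose m : ℝ) * (n₂.choose m : ℝ) with hT
  set s : ℝ := (Psat.card : ℝ) with hs
  -- lower bound on the sum
  have hlow : ε * m ^ 2 * T ≤ ∑ p ∈ P, (f p : ℝ) := by
    have hcast : (∑ p ∈ P, (f p : ℝ))
        = (G.card : ℝ) * (((n₁ - 1).choose (m - 1) : ℝ) * ((n₂ - 1).choose (m - 1) : ℝ)) := by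
      rw [← Nat.cast_sum]
      rw [hsum]
      push_cast
      ring
    rw [hcast]
    have hG' : ε * n₁ * n₂ ≤ (G.card : ℝ) := hG
    have hnn : (0:ℝ) ≤ ((n₁ - 1).choose (m - 1) : ℝ) * ((n₂ - 1).choose (m - 1) : ℝ) := by
      positivity
    have step : ε * n₁ * n₂ * (((n₁ - 1).choose (m - 1) : ℝ) * ((n₂ - 1).choose (m - 1) : ℝ))
        ≤ (G.card : ℝ) * (((n₁ - 1).choose (m - 1) : ℝ) * ((n₂ - 1).choose (m - 1) : ℝ)) :=
      mul_le_mul_of_nonneg_right hG' hnn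
    refine le_trans (le_of_eq ?_) step
    have e₁ : (n₁ : ℝ) * ((n₁ - 1).choose (m - 1) : ℝ) = (n₁.choose m : ℝ) * m := by
      exact_mod_cast congrArg (Nat.cast (R := ℝ)) hc₁
    have e₂ : (n₂ : ℝ) * ((n₂ - 1).choose (m - 1) : ℝ) = (n₂.choose m : ℝ) * m := by
      exact_mod_cast congrArg (Nat.cast (R := ℝ)) hc₂
    rw [hT]
    calc ε * (m:ℝ) ^ 2 * ((n₁.choose m : ℝ) * (n₂.choose m : ℝ))
        = ε * ((n₁.choose m : ℝ) * m) * ((n₂.choose m : ℝ) * m) := by ring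
      _ = ε * ((n₁:ℝ) * ((n₁ - 1).choose (m - 1) : ℝ)) * ((n₂:ℝ) * ((n₂ - 1).choose (m - 1) : ℝ)) := by
          rw [e₁, e₂]
      _ = ε * n₁ * n₂ * (((n₁ - 1).choose (m - 1) : ℝ) * ((n₂ - 1).choose (m - 1) : ℝ)) := by ring
  -- upper bound on the sum
  have hPsatsub : Psat ⊆ P := Finset.filter_subset _ _
  have hsT : s ≤ T := by
    rw [hs, hT, ← Nat.cast_mul, ← hPcard]
    exact_mod_cast Finset.card_le_card hPsatsub
  have hfbound : ∀ p ∈ P, (f p : ℝ) ≤ (m : ℝ) ^ 2 := by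
    intro p hp
    rw [hP, Finset.mem_filter] at hp
    have hsub : G.filter (fun e => e.1 ∈ p.1 ∧ e.2 ∈ p.2) ⊆ p.1 ×ˢ p.2 := by
      intro e he
      rw [Finset.mem_filter] at he
      exact Finset.mem_product.mpr he.2
    have := Finset.card_le_card hsub
    rw [Finset.card_product, hp.2.1, hp.2.2] at this
    rw [hf]
    calc ((G.filter (fun e => e.1 ∈ p.1 ∧ e.2 ∈ p.2)).card : ℝ) ≤ (m * m : ℕ) := by
          exact_mod_cast this
      _ = (m : ℝ) ^ 2 := by push_cast; ring
  have hhigh : ∑ p ∈ P, (f p : ℝ) ≤ s * m ^ 2 + (T - s) * (ε / 2 * m ^ 2) := by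
    have hsplit : ∑ p ∈ P, (f p : ℝ)
        = ∑ p ∈ Psat, (f p : ℝ)
          + ∑ p ∈ P.filter (fun p => ¬ ((ε / 2) * (m : ℝ) ^ 2 ≤ (f p : ℝ))), (f p : ℝ) := by
      rw [hPsat]
      exact (Finset.sum_filter_add_sum_filter_not P _ _).symm
    rw [hsplit]
    have h1 : ∑ p ∈ Psat, (f p : ℝ) ≤ s * m ^ 2 := by
      rw [hs]
      calc ∑ p ∈ Psat, (f p : ℝ) ≤ ∑ _p ∈ Psat, (m : ℝ) ^ 2 :=
            Finset.sum_le_sum fun p hp => hfbound p (hPsatsub hp)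
        _ = (Psat.card : ℝ) * m ^ 2 := by rw [Finset.sum_const]; ring
    have h2 : ∑ p ∈ P.filter (fun p => ¬ ((ε / 2) * (m : ℝ) ^ 2 ≤ (f p : ℝ))), (f p : ℝ)
        ≤ (T - s) * (ε / 2 * m ^ 2) := by
      have hcardcompl : ((P.filter (fun p => ¬ ((ε / 2) * (m : ℝ) ^ 2 ≤ (f p : ℝ)))).card : ℝ)
          = T - s := by
        have := Finset.card_filter_add_card_filter_not
          (s := P) (p := fun p => (ε / 2) * (m : ℝ) ^ 2 ≤ (f p : ℝ))
        rw [hT, hs, ← Nat.cast_mul, ← hPcard, hPsat]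
        push_cast [← this]
        ring
      calc ∑ p ∈ P.filter (fun p => ¬ ((ε / 2) * (m : ℝ) ^ 2 ≤ (f p : ℝ))), (f p : ℝ)
          ≤ ∑ _p ∈ P.filter (fun p => ¬ ((ε / 2) * (m : ℝ) ^ 2 ≤ (f p : ℝ))), (ε / 2 * m ^ 2) := by
            refine Finset.sum_le_sum fun p hp => ?_
            rw [Finset.mem_filter] at hp
            exact le_of_not_ge hp.2
        _ = ((P.filter (fun p => ¬ ((ε / 2) * (m : ℝ) ^ 2 ≤ (f p : ℝ)))).card : ℝ)
              * (ε / 2 * m ^ 2) := by rw [Finset.sum_const]; ring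
        _ = (T - s) * (ε / 2 * m ^ 2) := by rw [hcardcompl]
    linarith
  -- combine
  have hm2 : (0:ℝ) < (m : ℝ) ^ 2 := by positivity
  have hkey : ε * T ≤ s + (T - s) * (ε / 2) := by
    have h := le_trans hlow hhigh
    nlinarith [h, hm2]
  have h2ε : (0:ℝ) < 2 - ε := by linarith
  rw [div_mul_eq_mul_div, div_le_iff₀ h2ε]
  nlinarith [hkey]
end

section
/- Claim 4.3 (clean blocks inner product): Let T_{I,a} ⊆ ℝ^k and T_{J,b} ⊆ ℝ^k be subspaces. For subspaces S₁ = proj_{T_{I,a}}(T_{J,m}) (the projection of T_{J,m} onto T_{I,a}) and S₂ = proj_{T_{I,m'}}(T_{J,b}) (the projection of T_{J,b} onto T_{I,m'}), suppose u ∈ T_{I,a}, w ∈ T_{J,b}, T_{J,b} ⊆ T_{J,m}, and T_{I,a} ⊆ T_{I,m'}. Then ⟨u, w⟩ = ⟨π_{S₁}(u), π_{S₂}(w)⟩. -/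
open scoped RealInnerProductSpace

/-- Orthogonal projection onto a subspace of `ℝ^k`, as a map `E → E`. -/
noncomputable def projL {k : ℕ} (S : Submodule ℝ (EuclideanSpace ℝ (Fin k))) :
    EuclideanSpace ℝ (Fin k) →ₗ[ℝ] EuclideanSpace ℝ (Fin k) :=
  S.subtype ∘ₗ (S.orthogonalProjection).toLinearMap

lemma projL_mem {k : ℕ} (S : Submodule ℝ (EuclideanSpace ℝ (Fin k)))
    (x : EuclideanSpace ℝ (Fin k)) : projL S x ∈ S :=
  (S.orthogonalProjection x).2

lemma projL_eq_self {k : ℕ} {S : Submodule ℝ (EuclideanSpace ℝ (Fin k))}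
    {x : EuclideanSpace ℝ (Fin k)} (hx : x ∈ S) : projL S x = x := by
  exact (Submodule.starProjection_eq_self_iff (K := S)).mpr hx

lemma inner_projL_left {k : ℕ} (S : Submodule ℝ (EuclideanSpace ℝ (Fin k)))
    (x y : EuclideanSpace ℝ (Fin k)) : ⟪projL S x, y⟫ = ⟪x, projL S y⟫ :=
  Submodule.inner_starProjection_left_eq_right S x y

lemma key {k : ℕ} {S T : Submodule ℝ (EuclideanSpace ℝ (Fin k))} (hST : S ≤ T)
    {v w : EuclideanSpace ℝ (Fin k)} (hv : v ∈ T) (hw : projL T w ∈ S) :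
    ⟪projL S v, w⟫ = ⟪v, w⟫ := by
  have h0 : ⟪projL S v, w - projL T w⟫ = 0 := by
    have horth : w - projL T w ∈ Tᗮ := Submodule.sub_starProjection_mem_orthogonal (K := T) w
    exact (Submodule.mem_orthogonal T _).mp horth _ (hST (projL_mem S v))
  have h1 : ⟪projL S v, w⟫ = ⟪projL S v, projL T w⟫ := by
    have := inner_sub_right (𝕜 := ℝ) (projL S v) w (projL T w)
    linarith [this, h0]
  rw [h1, inner_projL_left, projL_eq_self hw]
  have h2 : ⟪v, projL T w⟫ = ⟪projL T v, w⟫ := (inner_projL_left T v w).symm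
  rw [h2, projL_eq_self hv]

/-- Claim 4.3: for `u ∈ T_{I,a}`, `w ∈ T_{J,b}` with `T_{J,b} ⊆ T_{J,m}` and
`T_{I,a} ⊆ T_{I,m'}`, letting `S₁` be the projection of `T_{J,m}` onto `T_{I,a}` and
`S₂` the projection of `T_{J,b}` onto `T_{I,m'}`, we have
`⟨u, w⟩ = ⟨π_{S₁}(u), π_{S₂}(w)⟩`. -/
theorem stmt_11 {k : ℕ}
    (T_Ia T_Im' T_Jb T_Jm : Submodule ℝ (EuclideanSpace ℝ (Fin k)))
    (u w : EuclideanSpace ℝ (Fin k))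
    (hu : u ∈ T_Ia) (hw : w ∈ T_Jb)
    (hJ : T_Jb ≤ T_Jm) (hI : T_Ia ≤ T_Im') :
    ⟪u, w⟫ = ⟪projL (T_Jm.map (projL T_Ia)) u, projL (T_Jb.map (projL T_Im')) w⟫ := by
  set S₁ := T_Jm.map (projL T_Ia)
  set S₂ := T_Jb.map (projL T_Im')
  have hS₁ : S₁ ≤ T_Ia := by
    rintro x ⟨y, -, rfl⟩; exact projL_mem _ y
  have hS₂ : S₂ ≤ T_Im' := by
    rintro x ⟨y, -, rfl⟩; exact projL_mem _ y
  have hwS₁ : projL T_Ia w ∈ S₁ := ⟨w, hJ hw, rfl⟩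
  have hwS₂ : projL T_Im' w ∈ S₂ := ⟨w, hw, rfl⟩
  have e1 : ⟪projL S₁ u, projL S₂ w⟫ = ⟪projL S₂ (projL S₁ u), w⟫ := by
    exact (inner_projL_left S₂ _ w).symm
  have e2 : ⟪projL S₂ (projL S₁ u), w⟫ = ⟪projL S₁ u, w⟫ :=
    key hS₂ (hI (hS₁ (projL_mem S₁ u))) hwS₂
  have e3 : ⟪projL S₁ u, w⟫ = ⟪u, w⟫ := key hS₁ hu hwS₁
  rw [e1, e2, e3]
end

section
/- Let A be an n×m real matrix with kernel V ⊆ ℝ^m of dimension k with basis b₁,…,b_k, and suppose w ∈ ℝ^m satisfies A·w = −𝟙 (the all-minus-ones vector in ℝ^n). Suppose there exist ℓ distinct indices i₁,…,i_ℓ such that A·(∑_{j=1}^{ℓ} e_{i_j}) = 𝟙 (the all-ones vector). Let M be the m × ((m+1)k + 1) matrix whose first (m+1)k columns are m+1 copies of each of b₁,…,b_k and whose last column is w. Then there exists a matrix M' of rank at most k with ‖M − M'‖₀ = ℓ, where ‖·‖₀ counts the number of differing entries. -/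
open Matrix

/- Completeness of the set cover reduction: given `A` with kernel basis `b₁,…,b_k`,
`w` with `A w = -𝟙`, and `ℓ` distinct column indices whose indicator sum maps to `𝟙`,
the matrix `M` (columns: `m+1` copies of each `b_i`, then `w`) admits a rank-`≤ k`
matrix `M'` with exactly `ℓ` differing entries. -/
open scoped Classical in
theorem stmt_13 {n m k : ℕ} (A : Matrix (Fin n) (Fin m) ℝ)
    (b : Fin k → (Fin m → ℝ))
    (hb_indep : LinearIndependent ℝ b)
    (hb_span : Submodule.span ℝ (Set.range b) = LinearMap.ker A.mulVecLin)
    (w : Fin m → ℝ) (hw : A.mulVec w = fun _ => -1)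
    (s : Finset (Fin m)) (ℓ : ℕ) (hs : s.card = ℓ)
    (hcov : A.mulVec (fun j => if j ∈ s then (1 : ℝ) else 0) = fun _ => 1)
    (M : Matrix (Fin m) (Fin ((m + 1) * k + 1)) ℝ)
    (hM : ∀ j : Fin ((m + 1) * k + 1),
      (fun i => M i j) =
        if h : (j : ℕ) < (m + 1) * k then b ⟨(j : ℕ) / (m + 1), Nat.div_lt_of_lt_mul h⟩
        else w) :
    ∃ M' : Matrix (Fin m) (Fin ((m + 1) * k + 1)) ℝ, M'.rank ≤ k ∧
      (Finset.univ.filter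
        (fun p : Fin m × Fin ((m + 1) * k + 1) => M p.1 p.2 ≠ M' p.1 p.2)).card = ℓ := by
  have hNlt : (m + 1) * k < (m + 1) * k + 1 := by omega
  refine ⟨fun i j => if (j : ℕ) < (m + 1) * k then M i j
      else w i + (if i ∈ s then 1 else 0), ?_, ?_⟩
  · -- rank bound
    have hcol : ∀ j : Fin ((m + 1) * k + 1),
        (fun i => if (j : ℕ) < (m + 1) * k then M i j else w i + (if i ∈ s then 1 else 0))
          ∈ Submodule.span ℝ (Set.range b) := by
      intro j
      by_cases h : (j : ℕ) < (m + 1) * k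
      · have : (fun i => if (j : ℕ) < (m + 1) * k then M i j
            else w i + (if i ∈ s then 1 else 0))
            = b ⟨(j : ℕ) / (m + 1), Nat.div_lt_of_lt_mul h⟩ := by
          funext i
          have := congrFun (hM j) i
          simp only [h, dif_pos] at this
          simp [h, this]
        rw [this]
        exact Submodule.subset_span ⟨_, rfl⟩
      · have hcoleq : (fun i => if (j : ℕ) < (m + 1) * k then M i j
            else w i + (if i ∈ s then 1 else 0))
            = w + (fun i => if i ∈ s then 1 else 0) := by
          funext i; simp [h]
        rw [hcoleq, hb_span, LinearMap.mem_ker]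
        simp only [Matrix.mulVecLin_apply, Matrix.mulVec_add, hw, hcov]
        funext x; simp
    have hrange : LinearMap.range (Matrix.mulVecLin ((fun i j =>
        if (j : ℕ) < (m + 1) * k then M i j else w i + (if i ∈ s then 1 else 0)) :
        Matrix (Fin m) (Fin ((m + 1) * k + 1)) ℝ)) ≤
        Submodule.span ℝ (Set.range b) := by
      refine (Matrix.range_mulVecLin _).le.trans ?_
      refine Submodule.span_le.2 (Set.range_subset_iff.2 ?_)
      intro j
      exact hcol j
    have h1 := Submodule.finrank_mono hrange
    have h2 : Module.finrank ℝ (Submodule.span ℝ (Set.range b)) = k := by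
      rw [finrank_span_eq_card hb_indep]; simp
    calc Matrix.rank _ ≤ _ := h1
      _ = k := h2
  · -- cardinality
    have hlast : ∀ i : Fin m, M i ⟨(m + 1) * k, hNlt⟩ = w i := by
      intro i
      have := congrFun (hM ⟨(m + 1) * k, hNlt⟩) i
      simpa using this
    rw [← hs]
    apply Finset.card_bij (fun (p : Fin m × Fin ((m + 1) * k + 1)) _ => p.1)
    · intro p hp
      simp only [Finset.mem_filter, Finset.mem_univ, true_and] at hp
      by_cases h : (p.2 : ℕ) < (m + 1) * k
      · exact (hp (by simp [h])).elim
      · have hp2 : p.2 = ⟨(m + 1) * k, hNlt⟩ := by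
          have := p.2.isLt
          have hv : (p.2 : ℕ) = (m + 1) * k := by omega
          exact Fin.ext (by simpa using hv)
        rw [hp2] at hp
        by_cases hmem : p.1 ∈ s
        · exact hmem
        · exact (hp (by simp [hlast p.1, hmem])).elim
    · intro p hp q hq hpq
      simp only [Finset.mem_filter, Finset.mem_univ, true_and] at hp hq
      have key : ∀ r : Fin m × Fin ((m + 1) * k + 1),
          M r.1 r.2 ≠ (if (r.2 : ℕ) < (m + 1) * k then M r.1 r.2
            else w r.1 + (if r.1 ∈ s then 1 else 0)) → r.2 = ⟨(m + 1) * k, hNlt⟩ := by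
        intro r hr
        by_cases h : (r.2 : ℕ) < (m + 1) * k
        · exact (hr (by simp [h])).elim
        · have := r.2.isLt
          have hv : (r.2 : ℕ) = (m + 1) * k := by omega
          exact Fin.ext (by simpa using hv)
      have h1 := key p hp
      have h2 := key q hq
      exact Prod.ext hpq (h1.trans h2.symm)
    · intro i hi
      refine ⟨(i, ⟨(m + 1) * k, hNlt⟩), ?_, rfl⟩
      simp only [Finset.mem_filter, Finset.mem_univ, true_and]
      simp [hlast i, hi]
end

section
/- Set cover reduction soundness claim: Let A ∈ ℝ^{n×m} with kernel V of dimension k and basis b₁,…,b_k, let w ∈ ℝ^m, and let M be the m × ((m+1)k+1) matrix whose first (m+1)k columns consist of m+1 copies of each b_i and whose last column is w. If M' is any matrix with ‖M − M'‖₀ ≤ m whose column space has dimension at most k, then the column space of M' equals V. -/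
open Matrix

/- Soundness claim of the set cover reduction: if `M'` has at most `m` entries
differing from `M` and its column space has dimension at most `k`, then the column
space of `M'` is exactly the kernel `V` of `A`. -/
open scoped Classical in
theorem stmt_14 {n m k : ℕ} (A : Matrix (Fin n) (Fin m) ℝ)
    (b : Fin k → (Fin m → ℝ))
    (hb_indep : LinearIndependent ℝ b)
    (hb_span : Submodule.span ℝ (Set.range b) = LinearMap.ker A.mulVecLin)
    (w : Fin m → ℝ)
    (M : Matrix (Fin m) (Fin ((m + 1) * k + 1)) ℝ)
    (hM : ∀ j : Fin ((m + 1) * k + 1),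
      (fun i => M i j) =
        if h : (j : ℕ) < (m + 1) * k then b ⟨(j : ℕ) / (m + 1), Nat.div_lt_of_lt_mul h⟩
        else w)
    (M' : Matrix (Fin m) (Fin ((m + 1) * k + 1)) ℝ)
    (hdiff : (Finset.univ.filter
      (fun p : Fin m × Fin ((m + 1) * k + 1) => M p.1 p.2 ≠ M' p.1 p.2)).card ≤ m)
    (hrank : Module.finrank ℝ (LinearMap.range M'.mulVecLin) ≤ k) :
    LinearMap.range M'.mulVecLin = LinearMap.ker A.mulVecLin := by
  have hkerfin : Module.finrank ℝ (LinearMap.ker A.mulVecLin) = k := by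
    rw [← hb_span, finrank_span_eq_card hb_indep, Fintype.card_fin]
  have hcol : ∀ j, (fun i => M' i j) ∈ LinearMap.range M'.mulVecLin := by
    intro j
    exact ⟨Pi.single j 1, by
      ext i
      simp [Matrix.mulVecLin_apply, Matrix.mulVec, dotProduct, Pi.single_apply]⟩
  have hbmem : ∀ i, b i ∈ LinearMap.range M'.mulVecLin := by
    intro i
    by_contra hnot
    have hj : ∀ t : Fin (m+1), (i : ℕ) * (m+1) + (t : ℕ) < (m+1) * k := by
      intro t
      have h1 : (i : ℕ) + 1 ≤ k := i.isLt
      have h2 : (t : ℕ) < m + 1 := t.isLt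
      nlinarith
    set J : Fin (m+1) → Fin ((m+1)*k+1) :=
      fun t => ⟨(i : ℕ) * (m+1) + (t : ℕ), Nat.lt_succ_of_lt (hj t)⟩ with hJ
    have hcolM : ∀ t, (fun r => M r (J t)) = b i := by
      intro t
      rw [hM, dif_pos (show ((J t : ℕ)) < (m+1)*k from hj t)]
      have hdiv : ((J t : ℕ)) / (m+1) = (i : ℕ) := by
        show ((i : ℕ) * (m+1) + (t : ℕ)) / (m+1) = i
        rw [mul_comm, Nat.mul_add_div (Nat.succ_pos m), Nat.div_eq_of_lt t.isLt, add_zero]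
      exact congrArg b (Fin.ext hdiv)
    have hr : ∀ t : Fin (m+1), ∃ r : Fin m, M r (J t) ≠ M' r (J t) := by
      intro t
      by_contra h
      push_neg at h
      apply hnot
      rw [← hcolM t]
      have : (fun r => M r (J t)) = (fun r => M' r (J t)) := funext h
      rw [this]
      exact hcol (J t)
    choose r hrne using hr
    have hinj : ∀ t₁ t₂ : Fin (m+1),
        ((r t₁, J t₁) : Fin m × Fin ((m+1)*k+1)) = (r t₂, J t₂) → t₁ = t₂ := by
      intro t₁ t₂ h
      have := congrArg (fun p => (p.2 : ℕ)) h
      simp only [hJ] at this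
      exact Fin.ext (by omega)
    have hcard : m + 1 ≤ (Finset.univ.filter
        (fun p : Fin m × Fin ((m + 1) * k + 1) => M p.1 p.2 ≠ M' p.1 p.2)).card := by
      calc m + 1 = (Finset.univ : Finset (Fin (m+1))).card := by simp
        _ ≤ _ := Finset.card_le_card_of_injOn (fun t => (r t, J t))
            (fun t _ => Finset.mem_filter.mpr ⟨Finset.mem_univ _, hrne t⟩)
            (fun t₁ _ t₂ _ h => hinj t₁ t₂ h)
    omega
  have hle : LinearMap.ker A.mulVecLin ≤ LinearMap.range M'.mulVecLin := by
    rw [← hb_span]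
    exact Submodule.span_le.mpr (Set.range_subset_iff.mpr hbmem)
  exact (Submodule.eq_of_le_of_finrank_le hle (le_trans hrank hkerfin.ge)).symm
end
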